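/- Let N ≥ 1, let S be an invertible 2N×2N complex matrix, and set T = S⁻¹·Sᴴ. Suppose that no eigenvalue of T has modulus 1. Then, counting algebraic multiplicity, T has exactly N eigenvalues λ with |λ| < 1 and exactly N eigenvalues λ with |λ| > 1; equivalently, the multiset of roots of the characteristic polynomial of T contains exactly N elements of modulus strictly less than 1. -/

import Mathlib

/-! For `T = S⁻¹ Sᴴ` we have `Tᴴ = S (Sᴴ)⁻¹`, which has the same characteristic polynomial as
`(Sᴴ)⁻¹ S = T⁻¹`. The roots of the characteristic polynomial of `Tᴴ` are the conjugates of those of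
`T`, and those of `T⁻¹` their inverses (it is a multiple of the reversed characteristic polynomial
of `T`). So the eigenvalues of `T`, with multiplicity, are invariant under `λ ↦ 1 / conj λ`, which
exchanges the inside and the outside of the unit circle; with none on the circle, the `2N`
eigenvalues split evenly. -/

open Polynomial

namespace Polynomial

variable {K : Type*} [Field K]

theorem reverse_X_sub_C (a : K) : (X - C a).reverse = 1 - C a * X := by
  rw [sub_eq_add_neg, ← C_neg, reverse_add_C, C_neg, ← one_mul X, reverse_mul_X, ← C_1, reverse_C]
  simp [sub_eq_add_neg]

theorem reverse_prod_X_sub_C (s : Multiset K) :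
    (s.map fun a => X - C a).prod.reverse = (s.map fun a => 1 - C a * X).prod := by
  induction s using Multiset.induction_on with
  | empty => simp [← C_1, -map_one, reverse_C]
  | cons a s ih =>
    simp only [Multiset.map_cons, Multiset.prod_cons, reverse_mul_of_domain, ih, reverse_X_sub_C]

theorem roots_prod_one_sub_C_mul_X {s : Multiset K} (hs : (0 : K) ∉ s) :
    (s.map fun a => 1 - C a * X).prod.roots = s.map (·⁻¹) := by
  have hroot : ∀ a ∈ s, (1 - C a * X).roots = {a⁻¹} := fun a ha => by
    have ha0 : a ≠ 0 := ne_of_mem_of_not_mem ha hs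
    have : 1 - C a * X = C (-a) * (X - C a⁻¹) := by
      rw [mul_sub, ← C_mul, neg_mul, mul_inv_cancel₀ ha0, map_neg, map_neg, C_1]; ring
    rw [this, roots_C_mul _ (neg_ne_zero.mpr ha0), roots_X_sub_C]
  rw [roots_multiset_prod, Multiset.bind_map, ← Multiset.bind_singleton]
  · exact Multiset.bind_congr hroot
  · simp only [Multiset.mem_map, not_exists, not_and]
    exact fun a _ h => by simpa using congrArg (eval 0) h

theorem roots_reverse {p : K[X]} (hp : p.Splits) (h0 : (0 : K) ∉ p.roots) :
    p.reverse.roots = p.roots.map (·⁻¹) := by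
  rcases eq_or_ne p 0 with rfl | hp0
  · simp
  conv_lhs => rw [hp.eq_prod_roots]
  rw [reverse_mul_of_domain, reverse_C, reverse_prod_X_sub_C,
    roots_C_mul _ (leadingCoeff_ne_zero.mpr hp0), roots_prod_one_sub_C_mul_X h0]

end Polynomial

namespace Matrix

variable {n : Type*} [Fintype n] [DecidableEq n]

theorem zero_notMem_roots_charpoly {K : Type*} [Field K] {A : Matrix n n K}
    (hA : IsUnit A.det) : (0 : K) ∉ A.charpoly.roots := by
  rw [mem_roots', IsRoot, ← coeff_zero_eq_eval_zero]
  rintro ⟨-, h⟩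
  rw [det_eq_sign_charpoly_coeff, h, mul_zero] at hA
  exact not_isUnit_zero hA

theorem roots_charpoly_nonsing_inv {K : Type*} [Field K] {A : Matrix n n K}
    (hA : IsUnit A.det) (hsplit : A.charpoly.Splits) :
    A⁻¹.charpoly.roots = A.charpoly.roots.map (·⁻¹) := by
  have hsign : (-1 : K[X]) ^ Fintype.card n * C (Ring.inverse A.det)
      = C ((-1) ^ Fintype.card n * (A.det)⁻¹) := by
    simp [Ring.inverse_eq_inv']
  rw [charpoly_inv A ((isUnit_iff_isUnit_det A).mpr hA), hsign, ← reverse_charpoly,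
    roots_C_mul _ (mul_ne_zero (by simp) (inv_ne_zero hA.ne_zero)),
    roots_reverse hsplit (zero_notMem_roots_charpoly hA)]

theorem charpoly_conjTranspose {R : Type*} [CommRing R] [StarRing R] (A : Matrix n n R) :
    Aᴴ.charpoly = A.charpoly.map (starRingEnd R) := by
  rw [← charpoly_transpose A, ← charpoly_map]
  rfl

theorem isUnit_det_nonsing_inv_mul_conjTranspose {R : Type*} [CommRing R] [StarRing R]
    {S : Matrix n n R} (hS : IsUnit S.det) : IsUnit (S⁻¹ * Sᴴ).det := by
  rw [det_mul, det_conjTranspose]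
  exact (isUnit_nonsing_inv_det S hS).mul hS.star

theorem charpoly_conjTranspose_nonsing_inv_mul_conjTranspose {R : Type*} [CommRing R] [StarRing R]
    {S : Matrix n n R} (hS : IsUnit S.det) :
    (S⁻¹ * Sᴴ)ᴴ.charpoly = (S⁻¹ * Sᴴ)⁻¹.charpoly := by
  rw [conjTranspose_mul, conjTranspose_conjTranspose, conjTranspose_nonsing_inv, mul_inv_rev,
    nonsing_inv_nonsing_inv S hS, charpoly_mul_comm]

theorem map_star_roots_charpoly_nonsing_inv_mul_conjTranspose {K : Type*} [Field K] [StarRing K]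
    [IsAlgClosed K] {S : Matrix n n K} (hS : IsUnit S.det) :
    (S⁻¹ * Sᴴ).charpoly.roots.map (starRingEnd K) = (S⁻¹ * Sᴴ).charpoly.roots.map (·⁻¹) := by
  have hsplit := IsAlgClosed.splits (S⁻¹ * Sᴴ).charpoly
  rw [← hsplit.roots_map, ← charpoly_conjTranspose,
    charpoly_conjTranspose_nonsing_inv_mul_conjTranspose hS,
    roots_charpoly_nonsing_inv (isUnit_det_nonsing_inv_mul_conjTranspose hS) hsplit]

end Matrix

theorem Multiset.card_filter_norm_lt_one_eq_card_filter_one_lt_norm {𝕜 : Type*} [RCLike 𝕜]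
    {s : Multiset 𝕜} (h0 : (0 : 𝕜) ∉ s) (hs : s.map (starRingEnd 𝕜) = s.map (·⁻¹)) :
    (s.filter (‖·‖ < 1)).card = (s.filter (1 < ‖·‖)).card := by
  calc (s.filter (‖·‖ < 1)).card = ((s.map (starRingEnd 𝕜)).filter (‖·‖ < 1)).card := by
        simp [Multiset.filter_map]
    _ = ((s.map (·⁻¹)).filter (‖·‖ < 1)).card := by rw [hs]
    _ = (s.filter (1 < ‖·‖)).card := by
        rw [Multiset.filter_map, Multiset.card_map]
        congr 1
        refine Multiset.filter_congr fun z hz => ?_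
        simpa using inv_lt_one₀ (norm_pos_iff.mpr (ne_of_mem_of_not_mem hz h0))

open Matrix in
theorem stmt_9_general (N : ℕ) (S : Matrix (Fin (2 * N)) (Fin (2 * N)) ℂ)
    (hS : IsUnit S.det)
    (hcirc : ∀ lam ∈ (S⁻¹ * Sᴴ).charpoly.roots, ‖lam‖ ≠ 1) :
    ((S⁻¹ * Sᴴ).charpoly.roots.filter (fun lam => ‖lam‖ < 1)).card = N ∧
    ((S⁻¹ * Sᴴ).charpoly.roots.filter (fun lam => 1 < ‖lam‖)).card = N := by
  set R := (S⁻¹ * Sᴴ).charpoly.roots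
  have hcard : R.card = 2 * N := by
    rw [IsAlgClosed.card_roots_eq_natDegree, charpoly_natDegree_eq_dim, Fintype.card_fin]
  have hbalance : (R.filter (‖·‖ < 1)).card = (R.filter (1 < ‖·‖)).card :=
    Multiset.card_filter_norm_lt_one_eq_card_filter_one_lt_norm
      (zero_notMem_roots_charpoly (isUnit_det_nonsing_inv_mul_conjTranspose hS))
      (map_star_roots_charpoly_nonsing_inv_mul_conjTranspose hS)
  have hsum : (R.filter (‖·‖ < 1)).card + (R.filter (1 < ‖·‖)).card = R.card := by
    conv_rhs => rw [← Multiset.filter_add_not (‖·‖ < 1) R]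
    rw [Multiset.card_add, Multiset.filter_congr fun z hz =>
      ((hcirc z hz).symm.le_iff_lt.symm.trans not_lt.symm)]
  omega

open Matrix in
/-- If `S` is an invertible `2N×2N` complex matrix and no eigenvalue of `T = S⁻¹ Sᴴ` has
modulus 1, then counting algebraic multiplicity `T` has exactly `N` eigenvalues of modulus `< 1`
and exactly `N` of modulus `> 1`. -/
theorem stmt_9 (N : ℕ) (hN : 1 ≤ N) (S : Matrix (Fin (2 * N)) (Fin (2 * N)) ℂ)
    (hS : IsUnit S.det)
    (hcirc : ∀ lam ∈ (S⁻¹ * Sᴴ).charpoly.roots, ‖lam‖ ≠ 1) :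
    ((S⁻¹ * Sᴴ).charpoly.roots.filter (fun lam => ‖lam‖ < 1)).card = N ∧
    ((S⁻¹ * Sᴴ).charpoly.roots.filter (fun lam => 1 < ‖lam‖)).card = N :=
  stmt_9_general N S hS hcirc
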